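/- Let B be a Banach A-bimodule and D : A → B* a continuous derivation. If the second adjoint D'' : A** → B*** is a derivation (with A** carrying the first Arens product) and B* ⊆ D''(A**), then Z^ℓ_{A**}(B**) = B**, i.e., for every b'' ∈ B** the map a'' ↦ b''·a'' : A** → B** is weak*-to-weak* continuous. -/

import Mathlib

open ContinuousLinearMap NormedSpace

namespace NormedSpace

/-- The topological dual of a seminormed space `E` (restored with its old Mathlib definition). -/
abbrev Dual (𝕜 : Type*) [NontriviallyNormedField 𝕜] (E : Type*) [SeminormedAddCommGroup E]
    [NormedSpace 𝕜 E] : Type _ := E →L[𝕜] 𝕜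

end NormedSpace

noncomputable section

section Defs

variable {X Y Z W : Type} [NormedAddCommGroup X] [NormedSpace ℝ X]
  [NormedAddCommGroup Y] [NormedSpace ℝ Y] [NormedAddCommGroup Z] [NormedSpace ℝ Z]
  [NormedAddCommGroup W] [NormedSpace ℝ W]

/-- The first adjoint `m^*` of a bounded bilinear map `m : X × Y → Z`,
as a map `Z^* × X → Y^*`, `⟨m^*(z',x), y⟩ = ⟨z', m(x,y)⟩`. -/
def adj1 (m : X →L[ℝ] Y →L[ℝ] Z) :
    Dual ℝ Z →L[ℝ] X →L[ℝ] Dual ℝ Y :=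
  (((ContinuousLinearMap.compL ℝ X (Y →L[ℝ] Z) (Dual ℝ Y)).flip m).comp
    (ContinuousLinearMap.compL ℝ Y Z ℝ))

@[simp] lemma adj1_apply (m : X →L[ℝ] Y →L[ℝ] Z) (z' : Dual ℝ Z) (x : X) (y : Y) :
    adj1 m z' x y = z' (m x y) := rfl

/-- The first (left) Arens extension `m^{***} : X^{**} × Y^{**} → Z^{**}` of a
bounded bilinear map `m : X × Y → Z`. -/
def arens (m : X →L[ℝ] Y →L[ℝ] Z) :
    Dual ℝ (Dual ℝ X) →L[ℝ] Dual ℝ (Dual ℝ Y) →L[ℝ] Dual ℝ (Dual ℝ Z) :=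
  adj1 (adj1 (adj1 m))

/-- The adjoint (dual map) of a bounded linear map. -/
def dualMap' (D : X →L[ℝ] Y) : Dual ℝ Y →L[ℝ] Dual ℝ X :=
  (ContinuousLinearMap.compL ℝ X Y ℝ).flip D

@[simp] lemma dualMap'_apply (D : X →L[ℝ] Y) (g : Dual ℝ Y) (x : X) :
    dualMap' D g x = g (D x) := rfl

/-- The second adjoint `D'' : X^{**} → Y^{**}` of a bounded linear map. -/
def bidualMap (D : X →L[ℝ] Y) : Dual ℝ (Dual ℝ X) →L[ℝ] Dual ℝ (Dual ℝ Y) :=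
  dualMap' (dualMap' D)

/-- Given an action `t : A × X → X`, the transposed action on the dual `X^*`:
`(dualAct t) a f = f ∘ (t a)`. -/
def dualAct (t : W →L[ℝ] X →L[ℝ] X) : W →L[ℝ] Dual ℝ X →L[ℝ] Dual ℝ X :=
  ((ContinuousLinearMap.compL ℝ X X ℝ).flip).comp t

@[simp] lemma dualAct_apply (t : W →L[ℝ] X →L[ℝ] X) (a : W) (f : Dual ℝ X) (x : X) :
    dualAct t a f x = f (t a x) := rfl

/-- `D : A → X` is a derivation with respect to the multiplication `mul'` on `A`
and the left action `l` and right action `r` (`r a x` means `x · a`) of `A` on `X`. -/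
def IsDer {A' : Type} [NormedAddCommGroup A'] [NormedSpace ℝ A']
    (mul' : A' →L[ℝ] A' →L[ℝ] A') (l r : A' →L[ℝ] X →L[ℝ] X) (D : A' →L[ℝ] X) : Prop :=
  ∀ a b : A', D (mul' a b) = l a (D b) + r b (D a)

/-- `D : A → X` is an inner derivation: `D a = a·x - x·a` for some `x`. -/
def IsInner {A' : Type} [NormedAddCommGroup A'] [NormedSpace ℝ A']
    (l r : A' →L[ℝ] X →L[ℝ] X) (D : A' →L[ℝ] X) : Prop :=
  ∃ x : X, ∀ a : A', D a = l a x - r a x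

/-- The bimodule axioms for actions `l`, `r` of an algebra with multiplication `mul'`. -/
def IsBimod {A' : Type} [NormedAddCommGroup A'] [NormedSpace ℝ A']
    (mul' : A' →L[ℝ] A' →L[ℝ] A') (l r : A' →L[ℝ] X →L[ℝ] X) : Prop :=
  (∀ a b x, l (mul' a b) x = l a (l b x)) ∧
  (∀ a b x, r (mul' a b) x = r b (r a x)) ∧
  (∀ a b x, l a (r b x) = r b (l a x))

/-- weak*-to-weak* continuity of a map between dual spaces. -/
def WStarCont (f : Dual ℝ X → Dual ℝ Y) : Prop :=
  ∀ y : Y, Continuous fun φ : WeakDual ℝ X => f φ y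

end Defs

/-- A packaged Banach `A`-bimodule (used to form iterated duals). -/
structure ModPk (A : Type) [NormedAddCommGroup A] [NormedSpace ℝ A] : Type 1 where
  X : Type
  [grp : NormedAddCommGroup X]
  [mod : NormedSpace ℝ X]
  l : A →L[ℝ] X →L[ℝ] X
  r : A →L[ℝ] X →L[ℝ] X

attribute [instance] ModPk.grp ModPk.mod

variable {A : Type} [NormedAddCommGroup A] [NormedSpace ℝ A]

/-- The canonical dual of a packaged bimodule. -/
def ModPk.dual (P : ModPk A) : ModPk A :=
  ⟨Dual ℝ P.X, dualAct P.r, dualAct P.l⟩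

/-- The `n`-th iterated dual of a packaged bimodule. -/
def ModPk.iter (P : ModPk A) : ℕ → ModPk A
  | 0 => P
  | n+1 => (P.iter n).dual

/-- A "level": an algebra (given by its bilinear multiplication) together with a bimodule. -/
structure Lvl : Type 1 where
  Alg : Type
  [g1 : NormedAddCommGroup Alg]
  [m1 : NormedSpace ℝ Alg]
  Mod : Type
  [g2 : NormedAddCommGroup Mod]
  [m2 : NormedSpace ℝ Mod]
  mul : Alg →L[ℝ] Alg →L[ℝ] Alg
  l : Alg →L[ℝ] Mod →L[ℝ] Mod
  r : Alg →L[ℝ] Mod →L[ℝ] Mod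

attribute [instance] Lvl.g1 Lvl.m1 Lvl.g2 Lvl.m2

/-- Passing to second duals: `A^{**}` with the first Arens product, acting on `B^{**}`
via the Arens extensions `π_ℓ^{***}` and `π_r^{***}` of the module actions. -/
def Lvl.double (Q : Lvl) : Lvl where
  Alg := Dual ℝ (Dual ℝ Q.Alg)
  Mod := Dual ℝ (Dual ℝ Q.Mod)
  mul := arens Q.mul
  l := arens Q.l
  r := (arens Q.r.flip).flip

/-- Iterated even duals: `Lvl.iter Q n` is the level `(A^{(2n)}, B^{(2n)})`. -/
def Lvl.iter (Q : Lvl) : ℕ → Lvl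
  | 0 => Q
  | n+1 => (Q.iter n).double

/-- The canonical embedding `A → A^{(2n)}`. -/
def Lvl.embA (Q : Lvl) : (n : ℕ) → Q.Alg →L[ℝ] (Q.iter n).Alg
  | 0 => ContinuousLinearMap.id ℝ _
  | n+1 => (inclusionInDoubleDual ℝ ((Q.iter n).Alg)).comp (Q.embA n)

/-- The canonical embedding `B → B^{(2n)}`. -/
def Lvl.embM (Q : Lvl) : (n : ℕ) → Q.Mod →L[ℝ] (Q.iter n).Mod
  | 0 => ContinuousLinearMap.id ℝ _
  | n+1 => (inclusionInDoubleDual ℝ ((Q.iter n).Mod)).comp (Q.embM n)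

/-- The left-topological-center condition `Z^ℓ_{A^{(2n+2)}}(B^{(2n+2)}) = B^{(2n+2)}`,
stated at the double of a level `Q`: for each `b` in the second-dual module, the map
`a ↦ b·a` is weak*-to-weak* continuous. -/
def Lvl.doubleZl (Q : Lvl) : Prop :=
  ∀ b : (Q.double).Mod, WStarCont (X := Dual ℝ Q.Alg) (Y := Dual ℝ Q.Mod)
    (fun a => (Q.double).r a b)

/-- The base level of a Banach algebra `A` with a Banach `A`-bimodule `B`. -/
def lvlOf (A : Type) [NormedRing A] [NormedAlgebra ℝ A]
    (B : Type) [NormedAddCommGroup B] [NormedSpace ℝ B]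
    (l r : A →L[ℝ] B →L[ℝ] B) : Lvl :=
  Lvl.mk A B (ContinuousLinearMap.mul ℝ A) l r

/-! Fix `b' ∈ B*` and pick `F₀ ∈ A**` with `D'' F₀ = b'`. Evaluating the derivation identity
`D''(φ □ F₀) = D''(F₀)·φ + F₀·D''(φ)` at `b''` expresses `⟨b''·φ, b'⟩` as
`φ(F₀·D'(b'')) - φ(D'(F₀·b''))`, a difference of two evaluations of `φ`, hence a
weak*-continuous function of `φ`. -/

section

variable {X Y Z : Type} [NormedAddCommGroup X] [NormedSpace ℝ X]
  [NormedAddCommGroup Y] [NormedSpace ℝ Y] [NormedAddCommGroup Z] [NormedSpace ℝ Z]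

lemma IsDer.apply_mul_apply {mul : X →L[ℝ] X →L[ℝ] X} {tl tr : X →L[ℝ] Y →L[ℝ] Y}
    {D : X →L[ℝ] Dual ℝ Y} (hD : IsDer mul (dualAct tr) (dualAct tl) D) (a b : X) (y : Y) :
    D (mul a b) y = D b (tr a y) + D a (tl b y) := by
  simpa using congrArg (· y) (hD a b)

lemma wStarCont_arens_left (m : X →L[ℝ] Y →L[ℝ] Z) (ψ : Dual ℝ (Dual ℝ Y)) :
    WStarCont (X := Dual ℝ X) (Y := Dual ℝ Z) fun φ => arens m φ ψ :=
  fun z' => WeakDual.eval_continuous (adj1 (adj1 m) ψ z')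

lemma continuous_bidualMap_apply (D : X →L[ℝ] Y) (g : Dual ℝ Y) :
    Continuous fun φ : WeakDual ℝ (Dual ℝ X) => bidualMap D φ g :=
  WeakDual.eval_continuous (dualMap' D g)

end

theorem stmt16_general (A : Type) [NormedRing A] [NormedAlgebra ℝ A]
    (B : Type) [NormedAddCommGroup B] [NormedSpace ℝ B]
    (l r : A →L[ℝ] B →L[ℝ] B)
    (D : A →L[ℝ] Dual ℝ B)
    -- `D'' : A** → B***` is a derivation
    (hD'' : IsDer (arens (ContinuousLinearMap.mul ℝ A))
      (dualAct (W := Dual ℝ (Dual ℝ A)) (X := Dual ℝ (Dual ℝ B)) ((arens r.flip).flip))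
      (dualAct (W := Dual ℝ (Dual ℝ A)) (X := Dual ℝ (Dual ℝ B)) (arens l))
      (bidualMap D))
    -- `B* ⊆ D''(A**)`
    (hsub : ∀ b' : Dual ℝ B, ∃ F : Dual ℝ (Dual ℝ A),
      bidualMap D F = inclusionInDoubleDual ℝ (Dual ℝ B) b') :
    -- `Z^ℓ_{A**}(B**) = B**`
    ∀ b'' : Dual ℝ (Dual ℝ B),
      WStarCont (X := Dual ℝ A) (Y := Dual ℝ B) (fun F => (arens r.flip).flip F b'') := by
  intro b'' b'
  obtain ⟨F₀, hF₀⟩ := hsub b'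
  have hpair : ∀ φ : Dual ℝ (Dual ℝ A), bidualMap D (arens (ContinuousLinearMap.mul ℝ A) φ F₀) b''
      - bidualMap D φ (arens l F₀ b'') = (arens r.flip).flip φ b'' b' := fun φ => by
    rw [hD''.apply_mul_apply, hF₀, dual_def]
    ring
  exact ((wStarCont_arens_left _ F₀ (dualMap' D b'')).sub
    (continuous_bidualMap_apply D _)).congr hpair

/-- **Theorem 2-30.** Let `B` be a Banach `A`-bimodule and `D : A → B*` a continuous
derivation. If `D'' : A** → B***` is a derivation and `B* ⊆ D''(A**)`, then
`Z^ℓ_{A**}(B**) = B**`. -/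
theorem stmt16 (A : Type) [NormedRing A] [NormedAlgebra ℝ A] [CompleteSpace A]
    (B : Type) [NormedAddCommGroup B] [NormedSpace ℝ B] [CompleteSpace B]
    (l r : A →L[ℝ] B →L[ℝ] B)
    (hbim : IsBimod (ContinuousLinearMap.mul ℝ A) l r)
    (D : A →L[ℝ] Dual ℝ B)
    (hD : IsDer (ContinuousLinearMap.mul ℝ A) (dualAct r) (dualAct l) D)
    -- `D'' : A** → B***` is a derivation
    (hD'' : IsDer (arens (ContinuousLinearMap.mul ℝ A))
      (dualAct (W := Dual ℝ (Dual ℝ A)) (X := Dual ℝ (Dual ℝ B)) ((arens r.flip).flip))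
      (dualAct (W := Dual ℝ (Dual ℝ A)) (X := Dual ℝ (Dual ℝ B)) (arens l))
      (bidualMap D))
    -- `B* ⊆ D''(A**)`
    (hsub : ∀ b' : Dual ℝ B, ∃ F : Dual ℝ (Dual ℝ A),
      bidualMap D F = inclusionInDoubleDual ℝ (Dual ℝ B) b') :
    -- `Z^ℓ_{A**}(B**) = B**`
    ∀ b'' : Dual ℝ (Dual ℝ B),
      WStarCont (X := Dual ℝ A) (Y := Dual ℝ B) (fun F => (arens r.flip).flip F b'') :=
  stmt16_general A B l r D hD'' hsub
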